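/- For a finite subset A of a Hausdorff abelian topological group G, the Kalton map κ_A : S_A → G is a topologically isomorphic embedding if and only if A is topologically independent in G. -/

import Mathlib

open Filter Topology

section Defs
variable {G : Type*} [AddCommGroup G] [TopologicalSpace G]

/-- A set `A` in a topological abelian group is *topologically independent* if `0 ∉ A` and
for every neighbourhood `W` of `0` there is a neighbourhood `U` of `0` such that whenever a
finite integer combination of elements of `A` lies in `U`, each of its terms lies in `W`. -/
def TopIndep (A : Set G) : Prop :=
  (0 : G) ∉ A ∧ ∀ W ∈ 𝓝 (0 : G), ∃ U ∈ 𝓝 (0 : G),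
    ∀ F : Finset G, ↑F ⊆ A → ∀ z : G → ℤ,
      (∑ a ∈ F, z a • a) ∈ U → ∀ a ∈ F, z a • a ∈ W

/-- Algebraic independence of a subset of an abelian group. -/
def Indep (A : Set G) : Prop :=
  (0 : G) ∉ A ∧ ∀ F : Finset G, ↑F ⊆ A → ∀ z : G → ℤ,
    (∑ a ∈ F, z a • a) = 0 → ∀ a ∈ F, z a • a = 0

/-- `A` is absolutely Cauchy summable: every neighbourhood of `0` contains the subgroup
generated by `A \ F` for some finite `F ⊆ A`. -/
def AbsCauchySummable (A : Set G) : Prop :=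
  ∀ U ∈ 𝓝 (0 : G), ∃ F : Finset G, ↑F ⊆ A ∧
    (AddSubgroup.closure (A \ ↑F) : Set G) ⊆ U

/-- `A` is absolutely summable: for every integer family the net of finite partial sums
converges. -/
def AbsSummable (A : Set G) : Prop :=
  ∀ z : A → ℤ, ∃ g : G, HasSum (fun a : A => z a • (a : G)) g

end Defs

/-- The direct sum `⊕_i H i`, realized as the subgroup of the product `Π i, H i`
consisting of finitely supported elements; it carries the topology inherited from the
Tychonoff product topology. -/
def FinSupp (ι : Type*) (H : ι → Type*) [∀ i, AddCommGroup (H i)] :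
    AddSubgroup (Π i, H i) where
  carrier := {f | {i | f i ≠ 0}.Finite}
  zero_mem' := by simp
  add_mem' := by
    intro f g hf hg
    refine (hf.union hg).subset fun i hi => ?_
    by_contra h
    simp only [Set.mem_union, Set.mem_setOf_eq, not_or, not_not] at h
    exact hi (by simp [h.1, h.2])
  neg_mem' := by
    intro f hf
    refine hf.subset fun i hi => ?_
    simp only [Set.mem_setOf_eq] at hi ⊢
    simpa using hi

/-- The Kalton map `κ_A : S_A = ⊕_{a ∈ A} ⟨a⟩ → G`, sending a finitely supported family to
the sum of its components. -/
noncomputable def kalton {G : Type*} [AddCommGroup G] (A : Set G)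
    (f : FinSupp A (fun a => AddSubgroup.zmultiples (a : G))) : G :=
  ∑ᶠ a : A, ((f.1 a : G))

section Sing
variable {ι : Type*} [DecidableEq ι] {H : ι → Type*} [∀ i, AddCommGroup (H i)]

/-- The element of the direct sum supported at `i` with value `x`. -/
def sing (i : ι) (x : H i) : FinSupp ι H :=
  ⟨Pi.single i x, (Set.finite_singleton i).subset (by
    intro b hb
    simp only [Set.mem_setOf_eq] at hb
    by_contra hba
    exact hb (Pi.single_eq_of_ne (by simpa using hba) x))⟩

end Sing


/-!
For finite `A` the Kalton map `κ_A` is a continuous homomorphism, and the neighbourhood filter of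
`0` in `S_A` is the infimum of the pullbacks of `𝓝 0` along the coordinate maps `g ↦ g a`.
So `κ_A` is inducing iff every coordinate tends to `0` along `κ_A⁻¹ (𝓝 0)`; writing the
coordinates as `g a = z a • a`, this says exactly that `A` is topologically independent.
Injectivity is then automatic, since `S_A` is Hausdorff.
-/

open Function Set

theorem isEmbedding_iff_injective_continuous_image_eq_inter_range {X Y : Type*}
    [TopologicalSpace X] [TopologicalSpace Y] {f : X → Y} :
    IsEmbedding f ↔ Injective f ∧ Continuous f ∧
      ∀ O : Set X, IsOpen O → ∃ V : Set Y, IsOpen V ∧ f '' O = V ∩ range f := by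
  constructor
  · intro hf
    refine ⟨hf.injective, hf.continuous, fun O hO => ?_⟩
    obtain ⟨V, hV, rfl⟩ := hf.isInducing.isOpen_iff.mp hO
    exact ⟨V, hV, image_preimage_eq_inter_range⟩
  · rintro ⟨hinj, hcont, himage⟩
    refine ⟨isInducing_iff _ |>.mpr <| le_antisymm (continuous_iff_le_induced.mp hcont)
      fun O hO => ?_, hinj⟩
    obtain ⟨V, hV, hOV⟩ := himage O hO
    refine isOpen_induced_iff.mpr ⟨V, hV, ?_⟩
    rw [← preimage_inter_range, ← hOV, hinj.preimage_image]

section Kalton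

variable {G : Type*} [AddCommGroup G] (A : Set G)

abbrev KaltonDomain : Type _ := FinSupp A fun a => AddSubgroup.zmultiples (a : G)

def KaltonDomain.ofCoeffs [Finite A] (z : G → ℤ) : KaltonDomain A :=
  ⟨fun a => ⟨z a • (a : G), AddSubgroup.zsmul_mem_zmultiples _ _⟩, toFinite _⟩

@[simp]
lemma KaltonDomain.ofCoeffs_apply [Finite A] (z : G → ℤ) (a : A) :
    ((KaltonDomain.ofCoeffs A z).1 a : G) = z a • a :=
  rfl

lemma KaltonDomain.ofCoeffs_surjective [Finite A] : Surjective (KaltonDomain.ofCoeffs A) := by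
  classical
  intro g
  have hcoeff (a : A) : ∃ k : ℤ, k • (a : G) = g.1 a :=
    AddSubgroup.mem_zmultiples_iff.mp (g.1 a).2
  choose z hz using hcoeff
  refine ⟨fun x => if hx : x ∈ A then z ⟨x, hx⟩ else 0, Subtype.ext <| funext fun a => ?_⟩
  exact Subtype.ext <| by simp [hz]

lemma kalton_ofCoeffs_eq_sum [Finite A] {F : Finset G} (hF : ↑F ⊆ A) {z : G → ℤ}
    (hz : ∀ a ∈ A, a ∉ F → z a = 0) :
    kalton A (KaltonDomain.ofCoeffs A z) = ∑ a ∈ F, z a • a := by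
  rw [show kalton A (KaltonDomain.ofCoeffs A z) = ∑ᶠ a ∈ A, z a • a from
    finsum_set_coe_eq_finsum_mem (f := fun x => z x • x) A, finsum_mem_eq_sum_of_subset _ _ hF]
  rintro x ⟨hxA, hx⟩
  by_contra hxF
  exact hx (by simp [hz x hxA hxF])

noncomputable def kaltonHom [Fintype A] : KaltonDomain A →+ G :=
  ∑ a : A, (AddSubgroup.zmultiples (a : G)).subtype.comp
    ((Pi.evalAddMonoidHom _ a).comp (FinSupp A _).subtype)

lemma coe_kaltonHom [Fintype A] : ⇑(kaltonHom A) = kalton A := by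
  ext g
  simp [kaltonHom, kalton, finsum_eq_sum_of_fintype]

variable [TopologicalSpace G]

lemma nhds_zero_kaltonDomain :
    𝓝 (0 : KaltonDomain A) = ⨅ a : A, (𝓝 0).comap fun g : KaltonDomain A => (g.1 a : G) := by
  rw [nhds_subtype, nhds_pi, Filter.pi, comap_iInf]
  congr 1; ext1 a
  rw [comap_comap, nhds_subtype, comap_comap]
  rfl

lemma topIndep_iff_tendsto_comap_kalton [Finite A] (h0 : (0 : G) ∉ A) :
    TopIndep A ↔ ∀ a : A,
      Tendsto (fun g : KaltonDomain A => (g.1 a : G)) ((𝓝 0).comap (kalton A)) (𝓝 0) := by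
  simp only [((𝓝 (0 : G)).basis_sets.comap (kalton A)).tendsto_left_iff, TopIndep, h0,
    not_false_eq_true, true_and]
  constructor
  · intro hindep a W hW
    obtain ⟨U, hU, hUW⟩ := hindep W hW
    refine ⟨U, hU, fun g hg => ?_⟩
    obtain ⟨z, rfl⟩ := KaltonDomain.ofCoeffs_surjective A g
    obtain ⟨F, rfl⟩ : ∃ F : Finset G, ↑F = A := ⟨_, (toFinite A).coe_toFinset⟩
    rw [mem_preimage, kalton_ofCoeffs_eq_sum _ subset_rfl fun x hx hxF => absurd hx hxF] at hg
    exact hUW F subset_rfl z hg a a.2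
  · intro htendsto W hW
    choose U hU hUW using fun a => htendsto a W hW
    refine ⟨⋂ a, U a, iInter_mem.mpr hU, fun F hF z hsum a ha => ?_⟩
    have hmem :
        KaltonDomain.ofCoeffs A ((F : Set G).indicator z) ∈ kalton A ⁻¹' U ⟨a, hF ha⟩ := by
      rw [mem_preimage, kalton_ofCoeffs_eq_sum A hF fun x _ hx => indicator_of_notMem hx z,
        Finset.sum_congr rfl fun x hx => by rw [indicator_of_mem (Finset.mem_coe.mpr hx)]]
      exact mem_iInter.mp hsum _
    simpa [indicator_of_mem (Finset.mem_coe.mpr ha)] using hUW _ hmem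

lemma continuous_kalton [Finite A] [ContinuousAdd G] : Continuous (kalton A) := by
  have := Fintype.ofFinite A
  rw [show kalton A = fun g : KaltonDomain A => ∑ a : A, (g.1 a : G) from
    funext fun _ => finsum_eq_sum_of_fintype _]
  exact continuous_finsetSum _ fun a _ =>
    continuous_subtype_val.comp <| (continuous_apply a).comp continuous_subtype_val

variable [IsTopologicalAddGroup G]

lemma isInducing_kalton_iff [Finite A] : IsInducing (kalton A) ↔
    ∀ a : A, Tendsto (fun g : KaltonDomain A => (g.1 a : G)) ((𝓝 0).comap (kalton A)) (𝓝 0) := by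
  have := Fintype.ofFinite A
  have hcont : 𝓝 0 ≤ (𝓝 0).comap (kalton A) := by
    simpa [← coe_kaltonHom] using (continuous_kalton A).tendsto 0 |>.le_comap
  rw [← coe_kaltonHom, IsTopologicalAddGroup.isInducing_iff_nhds_zero, coe_kaltonHom,
    ← hcont.ge_iff_eq, nhds_zero_kaltonDomain, le_iInf_iff]
  simp only [tendsto_iff_comap]

end Kalton

theorem stmt7 {G : Type*} [AddCommGroup G] [TopologicalSpace G] [IsTopologicalAddGroup G]
    [T2Space G] (A : Set G) (h0 : (0 : G) ∉ A) (hfin : A.Finite) :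
    (Function.Injective (kalton A) ∧ Continuous (kalton A) ∧
      ∀ O : Set ↥(FinSupp A (fun a => AddSubgroup.zmultiples (a : G))), IsOpen O →
        ∃ V : Set G, IsOpen V ∧ kalton A '' O = V ∩ Set.range (kalton A))
    ↔ TopIndep A := by
  have := hfin.to_subtype
  rw [← isEmbedding_iff_injective_continuous_image_eq_inter_range, isEmbedding_iff_isInducing,
    isInducing_kalton_iff, topIndep_iff_tendsto_comap_kalton A h0]
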